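/- arXiv:1701.07990 — 2 statements merged into one kernel-verified Lean document; each statement's English description precedes it below -/
import Mathlib

section
/- Let L be an n×n ICB matrix in δ-block echelon form and K a field. Then the set {f_C : ∅ ≠ C ⊆ {1,…,n−1}} is a Gröbner basis, with respect to the weighted reverse lexicographic order with weights ν(L), of the ideal J of K[x₁,…,xₙ] that it generates: for every nonzero f ∈ J, the leading monomial of f is divisible by x^{(Lχ_C)⁺} for some nonempty C ⊆ {1,…,n−1}. -/
open MvPolynomial Finset

/-- A critical binomial (CB) matrix. -/
def IsCB (n : ℕ) (L : Matrix (Fin n) (Fin n) ℤ) : Prop :=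
  (∀ i, 0 < L i i) ∧ (∀ i j : Fin n, i ≠ j → L i j ≤ 0) ∧ (∀ i, ∑ j, L i j = 0) ∧
    (∀ j, ∃ i, i ≠ j ∧ L i j ≠ 0)

/-- Irreducibility of a square matrix. -/
def IsIrreducibleMat {n : ℕ} (M : Matrix (Fin n) (Fin n) ℤ) : Prop :=
  ¬ ∃ I J : Set (Fin n), I.Nonempty ∧ J.Nonempty ∧ Disjoint I J ∧ I ∪ J = Set.univ ∧
      ∀ i ∈ I, ∀ j ∈ J, M i j = 0

def IsICB (n : ℕ) (L : Matrix (Fin n) (Fin n) ℤ) : Prop := IsCB n L ∧ IsIrreducibleMat L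

def IsPCB (n : ℕ) (L : Matrix (Fin n) (Fin n) ℤ) : Prop :=
  IsCB n L ∧ ∀ i j : Fin n, i ≠ j → L i j < 0

noncomputable def posExp {n : ℕ} (m : Fin n → ℤ) : Fin n →₀ ℕ :=
  Finsupp.equivFunOnFinite.symm fun i => (m i).toNat

noncomputable def negExp {n : ℕ} (m : Fin n → ℤ) : Fin n →₀ ℕ :=
  Finsupp.equivFunOnFinite.symm fun i => (-(m i)).toNat

noncomputable def binom (K : Type*) [Field K] {n : ℕ} (m : Fin n → ℤ) :
    MvPolynomial (Fin n) K :=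
  monomial (posExp m) 1 - monomial (negExp m) 1

def colLattice {n : ℕ} (L : Matrix (Fin n) (Fin n) ℤ) : AddSubgroup (Fin n → ℤ) :=
  AddSubgroup.closure {v | ∃ j : Fin n, v = fun i => L i j}

noncomputable def latticeIdeal (K : Type*) [Field K] {n : ℕ} (L : Matrix (Fin n) (Fin n) ℤ) :
    Ideal (MvPolynomial (Fin n) K) :=
  Ideal.span {f | ∃ m ∈ colLattice L, f = binom K m}

noncomputable def matrixIdeal (K : Type*) [Field K] {n : ℕ} (L : Matrix (Fin n) (Fin n) ℤ) :
    Ideal (MvPolynomial (Fin n) K) :=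
  Ideal.span {f | ∃ j : Fin n, f = binom K fun i => L i j}

def chi {n : ℕ} (C : Finset (Fin n)) : Fin n → ℤ := fun i => if i ∈ C then 1 else 0

/-- `L` is in `δ`-block echelon form: there is a partition of `{1,…,n-1}` into `δ`
consecutive nonempty intervals `I₁,…,I_δ` with `I_{δ+1} = {n}` (encoded by the monotone
surjection `β` sending each index to its block, with only the last vertex in the last
block) such that `L_{I_i,I_j} = 0` whenever `j + 2 ≤ i`, and every column of
`L_{I_{j+1},I_j}` is nonzero. -/
def IsBlockEchelon (n δ : ℕ) (L : Matrix (Fin n) (Fin n) ℤ) : Prop :=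
  ∃ β : Fin n → Fin (δ + 1), Monotone β ∧ Function.Surjective β ∧
    (∀ a : Fin n, β a = Fin.last δ ↔ (a : ℕ) = n - 1) ∧
    (∀ a b : Fin n, (β b : ℕ) + 2 ≤ (β a : ℕ) → L a b = 0) ∧
    (∀ b : Fin n, β b ≠ Fin.last δ →
      ∃ a : Fin n, (β a : ℕ) = (β b : ℕ) + 1 ∧ L a b ≠ 0)

/-- The weighted reverse lexicographic order with weights `ν` on (exponents of)
monomials: `x^α > x^β` iff `deg x^α > deg x^β`, or the degrees agree and the
rightmost nonzero entry of `α - β` is negative. -/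
def wrloGT {n : ℕ} (ν : Fin n → ℕ) (α β : Fin n →₀ ℕ) : Prop :=
  (∑ i, ν i * β i < ∑ i, ν i * α i) ∨
    ((∑ i, ν i * α i = ∑ i, ν i * β i) ∧
      ∃ j : Fin n, α j < β j ∧ ∀ k : Fin n, j < k → α k = β k)

-- ===== auxiliary development =====


lemma GB_posExp_apply {n : ℕ} (m : Fin n → ℤ) (i : Fin n) : posExp m i = (m i).toNat := rfl
lemma GB_negExp_apply {n : ℕ} (m : Fin n → ℤ) (i : Fin n) : negExp m i = (-(m i)).toNat := rfl

lemma GB_mulVec_apply {n : ℕ} (L : Matrix (Fin n) (Fin n) ℤ) (v : Fin n → ℤ) (i : Fin n) :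
    L.mulVec v i = ∑ j, L i j * v j := rfl

lemma GB_chi_mulVec {n : ℕ} (L : Matrix (Fin n) (Fin n) ℤ) (C : Finset (Fin n)) (i : Fin n) :
    L.mulVec (chi C) i = ∑ j ∈ C, L i j := by
  classical
  simp only [Matrix.mulVec, dotProduct, chi, mul_ite, mul_one, mul_zero]
  rw [Finset.sum_ite_mem, Finset.univ_inter]

/-- One "move" between exponent vectors, given by adding/removing a binomial. -/
def MoveStep {n : ℕ} (L : Matrix (Fin n) (Fin n) ℤ) (x y : Fin n →₀ ℕ) : Prop :=
  ∃ (C : Finset (Fin n)) (γ : Fin n →₀ ℕ),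
    x = γ + posExp (L.mulVec (chi C)) ∧ y = γ + negExp (L.mulVec (chi C))

lemma GB_eqvGen_diff {n : ℕ} (L : Matrix (Fin n) (Fin n) ℤ) {x y : Fin n →₀ ℕ}
    (h : Relation.EqvGen (MoveStep L) x y) :
    ∃ z : Fin n → ℤ, ∀ i, (x i : ℤ) - (y i : ℤ) = L.mulVec z i := by
  induction h with
  | rel x y hxy =>
      obtain ⟨C, γ, rfl, rfl⟩ := hxy
      refine ⟨chi C, fun i => ?_⟩
      simp only [Finsupp.add_apply, GB_posExp_apply, GB_negExp_apply]
      omega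
  | refl x => exact ⟨0, fun i => by simp [Matrix.mulVec_zero]⟩
  | symm x y _ ih =>
      obtain ⟨z, hz⟩ := ih
      refine ⟨-z, fun i => ?_⟩
      rw [Matrix.mulVec_neg]
      have := hz i
      simp only [Pi.neg_apply]
      omega
  | trans x y w _ _ ih1 ih2 =>
      obtain ⟨z1, h1⟩ := ih1
      obtain ⟨z2, h2⟩ := ih2
      refine ⟨z1 + z2, fun i => ?_⟩
      rw [Matrix.mulVec_add]
      have := h1 i; have := h2 i
      simp only [Pi.add_apply]
      omega

noncomputable def clsSum {n : ℕ} {K : Type*} [Field K] (R : (Fin n →₀ ℕ) → Prop)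
    [DecidablePred R] (f : MvPolynomial (Fin n) K) : K :=
  ∑ m ∈ f.support, if R m then f.coeff m else 0

section clsSum
variable {n : ℕ} {K : Type*} [Field K] (R : (Fin n →₀ ℕ) → Prop) [DecidablePred R]

lemma clsSum_eq_sum (f : MvPolynomial (Fin n) K) {s : Finset (Fin n →₀ ℕ)}
    (hs : f.support ⊆ s) : clsSum R f = ∑ m ∈ s, if R m then f.coeff m else 0 := by
  refine Finset.sum_subset hs fun m _ hm => ?_
  rw [MvPolynomial.notMem_support_iff.mp hm]
  simp

lemma clsSum_zero : clsSum R (0 : MvPolynomial (Fin n) K) = 0 := by simp [clsSum]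

lemma clsSum_add (f g : MvPolynomial (Fin n) K) :
    clsSum R (f + g) = clsSum R f + clsSum R g := by
  rw [clsSum_eq_sum R (f + g) (MvPolynomial.support_add),
      clsSum_eq_sum R f (Finset.subset_union_left),
      clsSum_eq_sum R g (Finset.subset_union_right), ← Finset.sum_add_distrib]
  refine Finset.sum_congr rfl fun m _ => ?_
  rw [MvPolynomial.coeff_add]
  split <;> simp

lemma clsSum_neg (f : MvPolynomial (Fin n) K) : clsSum R (-f) = - clsSum R f := by
  unfold clsSum
  rw [MvPolynomial.support_neg, ← Finset.sum_neg_distrib]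
  refine Finset.sum_congr rfl fun m _ => ?_
  rw [MvPolynomial.coeff_neg]
  split <;> simp

lemma clsSum_sub (f g : MvPolynomial (Fin n) K) :
    clsSum R (f - g) = clsSum R f - clsSum R g := by
  rw [sub_eq_add_neg, clsSum_add, clsSum_neg, sub_eq_add_neg]

lemma clsSum_monomial (m : Fin n →₀ ℕ) (c : K) :
    clsSum R (monomial m c) = if R m then c else 0 := by
  classical
  rcases eq_or_ne c 0 with rfl | hc
  · simp [clsSum]
  · unfold clsSum
    rw [MvPolynomial.support_monomial, if_neg hc, Finset.sum_singleton]
    simp [MvPolynomial.coeff_monomial]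

lemma clsSum_sum {ι : Type*} (s : Finset ι) (F : ι → MvPolynomial (Fin n) K) :
    clsSum R (∑ x ∈ s, F x) = ∑ x ∈ s, clsSum R (F x) := by
  classical
  induction s using Finset.cons_induction with
  | empty => simp [clsSum]
  | cons a s ha ih => rw [Finset.sum_cons, Finset.sum_cons, clsSum_add, ih]

end clsSum

lemma clsSum_span_zero {n : ℕ} {K : Type*} [Field K] (L : Matrix (Fin n) (Fin n) ℤ)
    (R : (Fin n →₀ ℕ) → Prop) [DecidablePred R]
    (hR : ∀ x y, MoveStep L x y → (R x ↔ R y))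
    (S : Set (MvPolynomial (Fin n) K))
    (hS : ∀ g ∈ S, ∃ C : Finset (Fin n), g = binom K (L.mulVec (chi C)))
    {f : MvPolynomial (Fin n) K} (hf : f ∈ Ideal.span S) : clsSum R f = 0 := by
  have main : ∀ p, clsSum R (p * f) = 0 := by
    induction hf using Submodule.span_induction with
    | mem g hg =>
        intro p
        obtain ⟨C, rfl⟩ := hS g hg
        conv_lhs => rw [← MvPolynomial.support_sum_monomial_coeff p, Finset.sum_mul]
        rw [clsSum_sum]
        refine Finset.sum_eq_zero fun m _ => ?_
        rw [binom, mul_sub, MvPolynomial.monomial_mul, MvPolynomial.monomial_mul, mul_one,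
          clsSum_sub, clsSum_monomial, clsSum_monomial]
        have hiff := hR (m + posExp (L.mulVec (chi C))) (m + negExp (L.mulVec (chi C)))
          ⟨C, m, rfl, rfl⟩
        by_cases h : R (m + posExp (L.mulVec (chi C)))
        · rw [if_pos h, if_pos (hiff.mp h), sub_self]
        · rw [if_neg h, if_neg fun hh => h (hiff.mpr hh), sub_self]
    | zero => intro p; rw [mul_zero, clsSum_zero]
    | add x y hx hy ihx ihy => intro p; rw [mul_add, clsSum_add, ihx p, ihy p, add_zero]
    | smul a x hx ihx => intro p; rw [smul_eq_mul, ← mul_assoc]; exact ihx (p * a)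
  have := main 1
  rwa [one_mul] at this

/-- Key combinatorial lemma. -/
lemma GB_key {n δ : ℕ} (hn : 3 ≤ n) (L : Matrix (Fin n) (Fin n) ℤ)
    (hoff : ∀ i j : Fin n, i ≠ j → L i j ≤ 0)
    (hrow : ∀ i, ∑ j, L i j = 0)
    (hech : IsBlockEchelon n δ L)
    (z : Fin n → ℤ) (j₀ : Fin n)
    (hneg : L.mulVec z j₀ < 0) (hzero : ∀ k, j₀ < k → L.mulVec z k = 0) :
    ∃ C : Finset (Fin n), C.Nonempty ∧ (⟨n - 1, by omega⟩ : Fin n) ∉ C ∧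
      ∀ i, L.mulVec (chi C) i ≤ 0 ∨ L.mulVec (chi C) i ≤ L.mulVec z i := by
  classical
  have hne : (Finset.univ : Finset (Fin n)).Nonempty := ⟨⟨0, by omega⟩, Finset.mem_univ _⟩
  set M := Finset.univ.sup' hne z with hM
  set C := Finset.univ.filter (fun j => z j = M) with hC
  have hmem : ∀ j, j ∈ C ↔ z j = M := fun j => by simp [hC]
  have hzle : ∀ j, z j ≤ M := fun j => Finset.le_sup' z (Finset.mem_univ j)
  obtain ⟨jm, _, hjm⟩ := Finset.exists_mem_eq_sup' hne z
  have hCne : C.Nonempty := ⟨jm, (hmem jm).mpr hjm.symm⟩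
  have hrep : ∀ i, ∑ j, L i j * (z j - M) = L.mulVec z i := by
    intro i
    rw [GB_mulVec_apply]
    have h1 : ∑ j, L i j * (z j - M) = (∑ j, L i j * z j) - (∑ j, L i j) * M := by
      rw [Finset.sum_mul, ← Finset.sum_sub_distrib]
      exact Finset.sum_congr rfl fun j _ => by ring
    rw [h1, hrow i, zero_mul, sub_zero]
  have hterm : ∀ i ∈ C, ∀ j : Fin n, 0 ≤ L i j * (z j - M) := by
    intro i hi j
    rcases eq_or_ne j i with rfl | hji
    · rw [(hmem _).mp hi, sub_self, mul_zero]
    · have h1 : L i j ≤ 0 := hoff i j (Ne.symm hji)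
      have h2 : z j - M ≤ 0 := sub_nonpos.mpr (hzle j)
      have := mul_nonneg (neg_nonneg.mpr h1) (neg_nonneg.mpr h2)
      rwa [neg_mul_neg] at this
  have huC : ∀ i ∈ C, 0 ≤ L.mulVec z i := fun i hi => by
    rw [← hrep i]; exact Finset.sum_nonneg fun j _ => hterm i hi j
  have heqcase : ∀ i ∈ C, L.mulVec z i = 0 → ∀ j, L i j ≠ 0 → z j = M := by
    intro i hi h0 j hLij
    have hz0 : ∑ j, L i j * (z j - M) = 0 := by rw [hrep i]; exact h0
    have := (Finset.sum_eq_zero_iff_of_nonneg (fun j _ => hterm i hi j)).mp hz0 j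
      (Finset.mem_univ j)
    rcases mul_eq_zero.mp this with h | h
    · exact absurd h hLij
    · omega
  have hin : ∀ i ∈ C, L.mulVec (chi C) i ≤ L.mulVec z i := by
    intro i hi
    have key2 : 0 ≤ ∑ j, L i j * (z j - chi C j - (M - 1)) := by
      refine Finset.sum_nonneg fun j _ => ?_
      by_cases hj : j ∈ C
      · have hzj : z j = M := (hmem j).mp hj
        have hc : chi C j = 1 := by simp [chi, hj]
        rw [hzj, hc]
        have h0 : (M : ℤ) - 1 - (M - 1) = 0 := by ring
        rw [h0, mul_zero]
      · have h1 : L i j ≤ 0 := hoff i j (by rintro rfl; exact hj hi)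
        have hc : chi C j = 0 := by simp [chi, hj]
        have hzj : z j ≠ M := fun h => hj ((hmem j).mpr h)
        have h2 : z j - chi C j - (M - 1) ≤ 0 := by
          rw [hc]; have := hzle j; omega
        have := mul_nonneg (neg_nonneg.mpr h1) (neg_nonneg.mpr h2)
        rwa [neg_mul_neg] at this
    have hexp : ∑ j, L i j * (z j - chi C j - (M - 1))
        = L.mulVec z i - L.mulVec (chi C) i := by
      have e1 : ∑ j, L i j * (z j - chi C j - (M - 1))
          = (∑ j, L i j * z j) - (∑ j, L i j * chi C j) - (∑ j, L i j) * (M - 1) := by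
        rw [Finset.sum_mul, ← Finset.sum_sub_distrib, ← Finset.sum_sub_distrib]
        exact Finset.sum_congr rfl fun j _ => by ring
      rw [e1, hrow i, zero_mul, sub_zero, ← GB_mulVec_apply L z i, ← GB_mulVec_apply L (chi C) i]
    rw [hexp] at key2
    omega
  have hout : ∀ i, i ∉ C → L.mulVec (chi C) i ≤ 0 := by
    intro i hi
    rw [GB_chi_mulVec]
    exact Finset.sum_nonpos fun j hj => hoff i j (by rintro rfl; exact hi hj)
  have hlast : (⟨n - 1, by omega⟩ : Fin n) ∉ C := by
    intro hlin
    obtain ⟨bl, hmono, hsurj, hliff, hech2, hcol⟩ := hech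
    have hzM : z ⟨n - 1, by omega⟩ = M := (hmem _).mp hlin
    have claim : ∀ s : ℕ, ∀ i : Fin n, j₀ < i → δ - (bl i : ℕ) ≤ s → z i = M := by
      intro s
      induction s with
      | zero =>
          intro i hi h0
          have hbl : (bl i : ℕ) = δ := by have := (bl i).isLt; omega
          have hieq : (i : ℕ) = n - 1 :=
            (hliff i).mp (Fin.ext (by rw [Fin.val_last]; exact hbl))
          have : i = ⟨n - 1, by omega⟩ := Fin.ext hieq
          rw [this]; exact hzM
      | succ s ih =>
          intro i hi hs
          by_cases hin' : (i : ℕ) = n - 1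
          · have : i = ⟨n - 1, by omega⟩ := Fin.ext hin'
            rw [this]; exact hzM
          · have hbne : bl i ≠ Fin.last δ := fun h => hin' ((hliff i).mp h)
            obtain ⟨a, hba, hLa⟩ := hcol i hbne
            have ha : j₀ < a := by
              by_contra hc
              push_neg at hc
              have h1 : (bl a : ℕ) ≤ (bl j₀ : ℕ) := hmono hc
              have h2 : (bl j₀ : ℕ) ≤ (bl i : ℕ) := hmono (le_of_lt hi)
              omega
            have hma : δ - (bl a : ℕ) ≤ s := by have := (bl a).isLt; omega
            exact heqcase a ((hmem a).mpr (ih a ha hma)) (hzero a ha) i hLa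
    have hj0n : (j₀ : ℕ) ≠ n - 1 := by
      intro h
      have heq : j₀ = ⟨n - 1, by omega⟩ := Fin.ext h
      have hzj : z j₀ = M := by rw [heq]; exact hzM
      have := huC j₀ ((hmem j₀).mpr hzj)
      omega
    have hbne : bl j₀ ≠ Fin.last δ := fun h => hj0n ((hliff j₀).mp h)
    obtain ⟨a, hba, hLa⟩ := hcol j₀ hbne
    have ha : j₀ < a := by
      by_contra hc
      push_neg at hc
      have h1 : (bl a : ℕ) ≤ (bl j₀ : ℕ) := hmono hc
      omega
    have hzaM : z a = M := claim δ a ha (by omega)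
    have hzj0 : z j₀ = M := heqcase a ((hmem a).mpr hzaM) (hzero a ha) j₀ hLa
    have := huC j₀ ((hmem j₀).mpr hzj0)
    omega
  refine ⟨C, hCne, hlast, fun i => ?_⟩
  by_cases hi : i ∈ C
  · exact Or.inr (hin i hi)
  · exact Or.inl (hout i hi)

/-- Let `L` be an ICB matrix in `δ`-block echelon form, `K` a field and
`ν = ν(L)`.  Then `{f_C : ∅ ≠ C ⊆ {1,…,n-1}}` is a Gröbner basis, w.r.t. the weighted
reverse lexicographic order with weights `ν`, of the ideal `J` it generates: for every
nonzero `f ∈ J`, the leading monomial of `f` is divisible by `x^{(LχC)⁺}` for some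
nonempty `C ⊆ {1,…,n-1}`. -/
theorem groebner_basis_property (n : ℕ) (hn : 3 ≤ n)
    (L : Matrix (Fin n) (Fin n) ℤ) (hL : IsICB n L)
    (δ : ℕ) (hech : IsBlockEchelon n δ L)
    (K : Type*) [Field K]
    (ν : Fin n → ℕ) (hν : ∀ i, 0 < ν i) (hgcd : Finset.univ.gcd ν = 1)
    (d : ℕ) (hd : 0 < d) (hadj : ∀ i j : Fin n, L.adjugate i j = (d : ℤ) * (ν j : ℤ)) :
    ∀ f ∈ Ideal.span {f | ∃ C : Finset (Fin n),
        C.Nonempty ∧ (⟨n - 1, by omega⟩ : Fin n) ∉ C ∧ f = binom K (L.mulVec (chi C))},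
      f ≠ 0 →
      ∀ α ∈ f.support, (∀ β ∈ f.support, β ≠ α → wrloGT ν α β) →
        ∃ C : Finset (Fin n), C.Nonempty ∧ (⟨n - 1, by omega⟩ : Fin n) ∉ C ∧
          posExp (L.mulVec (chi C)) ≤ α := by
  classical
  obtain ⟨⟨hpos, hoff, hrow, hcolnz⟩, hirr⟩ := hL
  intro f hf hf0 α hα hmax
  -- determinant of L is zero
  have hdet : L.det = 0 := by
    rw [← Matrix.exists_mulVec_eq_zero_iff]
    refine ⟨fun _ => 1, ?_, ?_⟩
    · intro h
      have := congrFun h ⟨0, by omega⟩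
      simp at this
    · funext i
      show ∑ j, L i j * 1 = 0
      simpa using hrow i
  -- weighted column sums vanish
  have hνL : ∀ j, ∑ k, (ν k : ℤ) * L k j = 0 := by
    intro j
    have h0 := Matrix.adjugate_mul L
    rw [hdet, zero_smul] at h0
    have h1 : (L.adjugate * L) ⟨0, by omega⟩ j = 0 := by rw [h0]; rfl
    rw [Matrix.mul_apply] at h1
    simp only [hadj] at h1
    have h2 : (d : ℤ) * ∑ k, (ν k : ℤ) * L k j = 0 := by
      rw [Finset.mul_sum, ← h1]
      exact Finset.sum_congr rfl fun k _ => by ring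
    have hd' : (d : ℤ) ≠ 0 := by exact_mod_cast hd.ne'
    exact (mul_eq_zero.mp h2).resolve_left hd'
  -- the move-class relation
  set Rq : (Fin n →₀ ℕ) → Prop := fun m => Relation.EqvGen (MoveStep L) m α with hRq
  have hcompat : ∀ x y, MoveStep L x y → (Rq x ↔ Rq y) := fun x y hxy =>
    ⟨fun hx => Relation.EqvGen.trans _ _ _
        (Relation.EqvGen.symm _ _ (Relation.EqvGen.rel _ _ hxy)) hx,
     fun hy => Relation.EqvGen.trans _ _ _ (Relation.EqvGen.rel _ _ hxy) hy⟩
  have hvan := clsSum_span_zero L Rq hcompat _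
    (fun g hg => by obtain ⟨C, _, _, rfl⟩ := hg; exact ⟨C, rfl⟩) hf
  -- there is another support element in the class of α
  have hex : ∃ b ∈ f.support, b ≠ α ∧ Rq b := by
    by_contra hno
    push_neg at hno
    have hcs : clsSum Rq f = f.coeff α := by
      unfold clsSum
      rw [Finset.sum_eq_single_of_mem α hα]
      · rw [if_pos (Relation.EqvGen.refl α)]
      · intro b hb hbne
        rw [if_neg (hno b hb hbne)]
    rw [hvan] at hcs
    exact (MvPolynomial.mem_support_iff.mp hα) hcs.symm
  obtain ⟨b, hbsup, hbne, hbR⟩ := hex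
  obtain ⟨z0, hz0⟩ := GB_eqvGen_diff L hbR
  set z : Fin n → ℤ := -z0 with hz
  have hu : ∀ i, L.mulVec z i = (α i : ℤ) - b i := by
    intro i
    rw [hz, Matrix.mulVec_neg]
    have := hz0 i
    simp only [Pi.neg_apply]
    omega
  -- degrees are equal
  have hdeg : (∑ i, ν i * α i) = ∑ i, ν i * b i := by
    have hsum : ∑ i, (ν i : ℤ) * ((α i : ℤ) - b i) = 0 := by
      calc ∑ i, (ν i : ℤ) * ((α i : ℤ) - b i)
          = ∑ i, ∑ j, ((ν i : ℤ) * L i j) * z j := by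
            refine Finset.sum_congr rfl fun i _ => ?_
            rw [← hu i, GB_mulVec_apply, Finset.mul_sum]
            exact Finset.sum_congr rfl fun j _ => by ring
        _ = ∑ j, ∑ i, ((ν i : ℤ) * L i j) * z j := Finset.sum_comm
        _ = ∑ j, (∑ i, (ν i : ℤ) * L i j) * z j := by
            exact Finset.sum_congr rfl fun j _ => (Finset.sum_mul _ _ _).symm
        _ = 0 := by simp [hνL]
    have h3 : ∑ i, ((ν i : ℤ) * α i - (ν i : ℤ) * b i) = 0 := by
      rw [← hsum]
      exact Finset.sum_congr rfl fun i _ => by ring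
    rw [Finset.sum_sub_distrib, sub_eq_zero] at h3
    exact_mod_cast h3
  rcases hmax b hbsup hbne with hlt | ⟨hdeq, j₀, hj0, hjr⟩
  · rw [hdeg] at hlt; exact absurd hlt (lt_irrefl _)
  have hneg : L.mulVec z j₀ < 0 := by
    rw [hu]
    have : (α j₀ : ℤ) < b j₀ := by exact_mod_cast hj0
    omega
  have hzero : ∀ k, j₀ < k → L.mulVec z k = 0 := fun k hk => by
    rw [hu, hjr k hk, sub_self]
  obtain ⟨C, hCne, hClast, hCw⟩ := GB_key hn L hoff hrow hech z j₀ hneg hzero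
  refine ⟨C, hCne, hClast, ?_⟩
  rw [Finsupp.le_def]
  intro i
  have h1 := hCw i
  have h2 := hu i
  show (L.mulVec (chi C) i).toNat ≤ α i
  rcases h1 with h1 | h1 <;> omega
end

section
/- Let L be an n×n ICB matrix in δ-block echelon form and K a field. Let J be the ideal of K[x₁,…,xₙ] generated by the binomials f_C for all nonempty C ⊆ {1,…,n−1}. Then J : (x_n) = J, and J equals the lattice ideal I(𝓛). -/
/-!
Every vector of `𝓛` is `Lu`. Removing from `u` the indicator of the set `C` where `u` is
maximal keeps the exponent `(Lu)⁻ + L(u - χ_C)` nonnegative, so `f_{Lu}` is a combination of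
`f_C` and `f_{L(u - χ_C)}`; induction on the spread of `u` gives `J = I(𝓛)`. Finally `I(𝓛)` is
the kernel of `K[x] → K[ℤⁿ / 𝓛]`, `x^d ↦ t^{[d]}`, which sends `xₙ` to a unit, so
`I(𝓛) : (xₙ) = I(𝓛)`.
-/

open MvPolynomial Finset

open scoped Matrix

section Binomials

variable {n : ℕ} (K : Type*) [Field K]

@[simp] lemma posExp_apply (m : Fin n → ℤ) (i : Fin n) : posExp m i = (m i).toNat := rfl

@[simp] lemma negExp_apply (m : Fin n → ℤ) (i : Fin n) : negExp m i = (-m i).toNat := rfl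

lemma binom_zero : binom K (0 : Fin n → ℤ) = 0 := sub_self _

lemma binom_neg (m : Fin n → ℤ) : binom K (-m) = -binom K m := by
  have hneg : negExp (-m) = posExp m := by ext; simp
  rw [binom, binom, neg_sub, hneg]
  rfl

lemma monomial_sub_monomial_eq_monomial_inf_mul_binom (a b : Fin n →₀ ℕ) :
    monomial a (1 : K) - monomial b 1 =
      monomial (a ⊓ b) 1 * binom K (fun i => (a i : ℤ) - b i) := by
  have hpos : a ⊓ b + posExp (fun i => (a i : ℤ) - b i) = a := by
    ext i; simp only [Finsupp.add_apply, Finsupp.inf_apply, posExp_apply]; omega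
  have hneg : a ⊓ b + negExp (fun i => (a i : ℤ) - b i) = b := by
    ext i; simp only [Finsupp.add_apply, Finsupp.inf_apply, negExp_apply]; omega
  rw [binom, mul_sub, monomial_mul, monomial_mul, one_mul, hpos, hneg]

variable {K}

lemma monomial_sub_monomial_mem {I : Ideal (MvPolynomial (Fin n) K)} {a b : Fin n →₀ ℕ}
    (h : binom K (fun i => (a i : ℤ) - b i) ∈ I) : monomial a (1 : K) - monomial b 1 ∈ I := by
  rw [monomial_sub_monomial_eq_monomial_inf_mul_binom]
  exact I.mul_mem_left _ h

/-- Going from `x^{m⁻}` to `x^{m⁺}` through the intermediate monomial `x^{m⁻ + m₂}`. -/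
lemma binom_add_mem {I : Ideal (MvPolynomial (Fin n) K)} {m₁ m₂ : Fin n → ℤ}
    (h₁ : binom K m₁ ∈ I) (h₂ : binom K m₂ ∈ I)
    (h : ∀ i, 0 ≤ (negExp (m₁ + m₂) i : ℤ) + m₂ i) : binom K (m₁ + m₂) ∈ I := by
  set c : Fin n →₀ ℕ :=
    Finsupp.equivFunOnFinite.symm fun i => ((negExp (m₁ + m₂) i : ℤ) + m₂ i).toNat
  have hc : ∀ i, (c i : ℤ) = (negExp (m₁ + m₂) i : ℤ) + m₂ i := fun i => Int.toNat_of_nonneg (h i)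
  rw [binom, ← sub_add_sub_cancel _ (monomial c 1)]
  refine add_mem (monomial_sub_monomial_mem ?_) (monomial_sub_monomial_mem ?_)
  · convert h₁ using 2; ext i; simp only [hc, posExp_apply, negExp_apply, Pi.add_apply]; omega
  · convert h₂ using 2; ext i; simp only [hc]; ring

end Binomials

lemma colLattice_eq_range_mulVecLin {n : ℕ} (L : Matrix (Fin n) (Fin n) ℤ) :
    colLattice L = (LinearMap.range L.mulVecLin).toAddSubgroup := by
  have hcols : {v | ∃ j : Fin n, v = fun i => L i j} = Set.range L.col := by
    ext v; exact ⟨fun ⟨j, h⟩ => ⟨j, h.symm⟩, fun ⟨j, h⟩ => ⟨j, h.symm⟩⟩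
  rw [Matrix.range_mulVecLin, Submodule.span_int_eq_addSubgroupClosure, colLattice, hcols]

lemma mem_colLattice_iff {n : ℕ} {L : Matrix (Fin n) (Fin n) ℤ} {m : Fin n → ℤ} :
    m ∈ colLattice L ↔ ∃ u, L *ᵥ u = m := by
  simp [colLattice_eq_range_mulVecLin]

section SignPattern

variable {n : ℕ} {L : Matrix (Fin n) (Fin n) ℤ}

lemma mulVec_const_eq_zero (hrow : ∀ i, ∑ j, L i j = 0) (c : ℤ) : L *ᵥ (fun _ => c) = 0 := by
  ext i
  simp [Matrix.mulVec, dotProduct, ← Finset.sum_mul, hrow i]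

lemma mulVec_chi_compl (hrow : ∀ i, ∑ j, L i j = 0) (C : Finset (Fin n)) :
    L *ᵥ chi Cᶜ = -(L *ᵥ chi C) := by
  have hchi : chi Cᶜ = (fun _ => 1) - chi C := by
    ext i; by_cases h : i ∈ C <;> simp [chi, h]
  rw [hchi, Matrix.mulVec_sub, mulVec_const_eq_zero hrow, zero_sub]

lemma mulVec_apply_nonneg_of_forall_le (hsign : ∀ i j : Fin n, i ≠ j → L i j ≤ 0)
    (hrow : ∀ i, ∑ j, L i j = 0) {u : Fin n → ℤ} {i : Fin n} (hi : ∀ j, u j ≤ u i) :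
    0 ≤ (L *ᵥ u) i := by
  have h : (L *ᵥ u) i = ∑ j, L i j * (u j - u i) := by
    simp [Matrix.mulVec, dotProduct, mul_sub, Finset.sum_sub_distrib, ← Finset.sum_mul, hrow i]
  rw [h]
  refine Finset.sum_nonneg fun j _ => ?_
  rcases eq_or_ne i j with rfl | hij
  · simp
  · exact mul_nonneg_of_nonpos_of_nonpos (hsign i j hij) (sub_nonpos.2 (hi j))

lemma mulVec_chi_apply_nonpos (hsign : ∀ i j : Fin n, i ≠ j → L i j ≤ 0) {C : Finset (Fin n)}
    {i : Fin n} (hi : i ∉ C) : (L *ᵥ chi C) i ≤ 0 := by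
  change ∑ j, L i j * chi C j ≤ 0
  refine Finset.sum_nonpos fun j _ => ?_
  by_cases hj : j ∈ C
  · simpa [chi, hj] using hsign i j (by rintro rfl; exact hi hj)
  · simp [chi, hj]

end SignPattern

/-- The ideal `J`, with `ℓ` in the role of the last vertex `n`. -/
noncomputable def cutIdeal (K : Type*) [Field K] {n : ℕ} (L : Matrix (Fin n) (Fin n) ℤ)
    (ℓ : Fin n) : Ideal (MvPolynomial (Fin n) K) :=
  Ideal.span {f | ∃ C : Finset (Fin n), C.Nonempty ∧ ℓ ∉ C ∧ f = binom K (L *ᵥ chi C)}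

section CutIdeal

variable {K : Type*} [Field K] {n : ℕ} {L : Matrix (Fin n) (Fin n) ℤ} {ℓ : Fin n}

lemma binom_mulVec_chi_mem_cutIdeal (hrow : ∀ i, ∑ j, L i j = 0) (C : Finset (Fin n)) :
    binom K (L *ᵥ chi C) ∈ cutIdeal K L ℓ := by
  have avoiding : ∀ C : Finset (Fin n), ℓ ∉ C → binom K (L *ᵥ chi C) ∈ cutIdeal K L ℓ := by
    intro C hℓ
    rcases C.eq_empty_or_nonempty with rfl | hC
    · have hchi : chi (∅ : Finset (Fin n)) = 0 := by ext; simp [chi]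
      rw [hchi, Matrix.mulVec_zero, binom_zero]
      exact zero_mem _
    · exact Ideal.subset_span ⟨C, hC, hℓ, rfl⟩
  by_cases hℓ : ℓ ∈ C
  · rw [← neg_neg (L *ᵥ chi C), ← mulVec_chi_compl hrow, binom_neg]
    exact neg_mem (avoiding Cᶜ (by simpa using hℓ))
  · exact avoiding C hℓ

lemma binom_mulVec_mem_cutIdeal_of_le_add (hsign : ∀ i j : Fin n, i ≠ j → L i j ≤ 0)
    (hrow : ∀ i, ∑ j, L i j = 0) (k : ℕ) :
    ∀ u : Fin n → ℤ, (∀ i j, u i ≤ u j + k) → binom K (L *ᵥ u) ∈ cutIdeal K L ℓ := by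
  induction k with
  | zero =>
    intro u hu
    have hconst : u = fun _ => u ℓ := funext fun i => le_antisymm (by simpa using hu i ℓ)
      (by simpa using hu ℓ i)
    rw [hconst, mulVec_const_eq_zero hrow, binom_zero]
    exact zero_mem _
  | succ k ih =>
    intro u hu
    obtain ⟨i₀, -, hi₀⟩ := Finset.exists_max_image univ u ⟨ℓ, mem_univ ℓ⟩
    replace hi₀ : ∀ j, u j ≤ u i₀ := fun j => hi₀ j (mem_univ j)
    set C := univ.filter fun i => u i = u i₀
    set u' := u - chi C
    have hu' : ∀ i, u' i = if u i = u i₀ then u i - 1 else u i := fun i => by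
      by_cases h : u i = u i₀ <;> simp [u', C, chi, h]
    have hspread : ∀ i j, u' i ≤ u' j + k := fun i j => by
      have := hi₀ i; have := hi₀ j; have := hu i j; have := hu i₀ j
      rw [hu', hu']; split_ifs <;> omega
    have hmax : ∀ i ∈ C, ∀ j, u' j ≤ u' i := fun i hi j => by
      have := hi₀ j; have := (mem_filter.1 hi).2
      rw [hu', hu']; split_ifs <;> omega
    have hsplit : L *ᵥ u = L *ᵥ chi C + L *ᵥ u' := by
      rw [← Matrix.mulVec_add, add_sub_cancel]
    rw [hsplit]
    refine binom_add_mem (binom_mulVec_chi_mem_cutIdeal hrow C) (ih u' hspread) fun i => ?_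
    rw [negExp_apply, Pi.add_apply]
    by_cases hi : i ∈ C
    · have := mulVec_apply_nonneg_of_forall_le hsign hrow (hmax i hi); omega
    · have := mulVec_chi_apply_nonpos hsign hi; omega

lemma binom_mulVec_mem_cutIdeal (hsign : ∀ i j : Fin n, i ≠ j → L i j ≤ 0)
    (hrow : ∀ i, ∑ j, L i j = 0) (u : Fin n → ℤ) : binom K (L *ᵥ u) ∈ cutIdeal K L ℓ := by
  refine binom_mulVec_mem_cutIdeal_of_le_add hsign hrow (2 * ∑ i, |u i|).toNat u fun i j => ?_
  have hi : |u i| ≤ ∑ i, |u i| := single_le_sum (fun i _ => abs_nonneg (u i)) (mem_univ i)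
  have hj : |u j| ≤ ∑ i, |u i| := single_le_sum (fun i _ => abs_nonneg (u i)) (mem_univ j)
  have := le_abs_self (u i); have := neg_abs_le (u j)
  omega

lemma cutIdeal_eq_latticeIdeal (hsign : ∀ i j : Fin n, i ≠ j → L i j ≤ 0)
    (hrow : ∀ i, ∑ j, L i j = 0) : cutIdeal K L ℓ = latticeIdeal K L := by
  apply le_antisymm <;> refine Ideal.span_le.2 ?_
  · rintro f ⟨C, -, -, rfl⟩
    exact Ideal.subset_span ⟨_, mem_colLattice_iff.2 ⟨chi C, rfl⟩, rfl⟩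
  · rintro f ⟨m, hm, rfl⟩
    obtain ⟨u, rfl⟩ := mem_colLattice_iff.1 hm
    exact binom_mulVec_mem_cutIdeal hsign hrow u

end CutIdeal

lemma RingHom.ker_colon_span_singleton_of_isUnit {R S : Type*} [CommRing R] [Semiring S]
    (f : R →+* S) {r : R} (hr : IsUnit (f r)) :
    (RingHom.ker f).colon (Ideal.span {r}) = RingHom.ker f := by
  ext a
  rw [Submodule.mem_colon_span_singleton, smul_eq_mul, RingHom.mem_ker, RingHom.mem_ker, map_mul,
    hr.mul_left_eq_zero]

section LatticeQuotient

variable {n : ℕ} (L : Matrix (Fin n) (Fin n) ℤ) (K : Type*) [Field K]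

noncomputable def expClass : (Fin n →₀ ℕ) →+ (Fin n → ℤ) ⧸ colLattice L :=
  (QuotientAddGroup.mk' _).comp
    { toFun := fun d i => d i
      map_zero' := by ext; simp
      map_add' := fun _ _ => by ext; simp }

noncomputable def latticeQuotientAlgHom :
    MvPolynomial (Fin n) K →ₐ[K] AddMonoidAlgebra K ((Fin n → ℤ) ⧸ colLattice L) :=
  AddMonoidAlgebra.mapDomainAlgHom K K (expClass L)

variable {L K}

lemma expClass_eq_expClass_iff {a b : Fin n →₀ ℕ} :
    expClass L a = expClass L b ↔ (fun i => (a i : ℤ) - b i) ∈ colLattice L :=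
  QuotientAddGroup.eq_iff_sub_mem

lemma latticeQuotientAlgHom_monomial (d : Fin n →₀ ℕ) (c : K) :
    latticeQuotientAlgHom L K (monomial d c) = AddMonoidAlgebra.single (expClass L d) c :=
  AddMonoidAlgebra.mapDomain_single

lemma isUnit_latticeQuotientAlgHom_X (i : Fin n) : IsUnit (latticeQuotientAlgHom L K (X i)) := by
  rw [X, latticeQuotientAlgHom_monomial, ← toAdd_ofAdd (expClass L _),
    ← AddMonoidAlgebra.of_apply]
  exact (Group.isUnit _).map _

lemma latticeIdeal_le_ker : latticeIdeal K L ≤ RingHom.ker (latticeQuotientAlgHom L K) := by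
  refine Ideal.span_le.2 ?_
  rintro f ⟨m, hm, rfl⟩
  have hcls : expClass L (posExp m) = expClass L (negExp m) := by
    rw [expClass_eq_expClass_iff]
    convert hm using 1
    ext i; simp only [posExp_apply, negExp_apply]; omega
  simp [binom, latticeQuotientAlgHom_monomial, hcls]

/-- Modulo the lattice ideal, `x^d` only depends on the class of `d`, so the quotient map
`K[x] → K[x] / I(𝓛)` factors through `K[ℤⁿ / 𝓛]`. -/
lemma ker_le_latticeIdeal : RingHom.ker (latticeQuotientAlgHom L K) ≤ latticeIdeal K L := by
  intro f hf
  let π := Ideal.Quotient.mkₐ K (latticeIdeal K L)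
  have hfactors : (fun d => π (monomial d 1)).FactorsThrough (expClass L) := fun a b hab => by
    refine (Ideal.Quotient.mk_eq_mk_iff_sub_mem _ _).2 (monomial_sub_monomial_mem ?_)
    exact Ideal.subset_span ⟨_, expClass_eq_expClass_iff.1 hab, rfl⟩
  let ψ : AddMonoidAlgebra K ((Fin n → ℤ) ⧸ colLattice L) →ₗ[K] _ :=
    Finsupp.linearCombination K (Function.extend (expClass L) (fun d => π (monomial d 1)) 0) ∘ₗ
      (AddMonoidAlgebra.coeffLinearEquiv K).toLinearMap
  have hψ : ψ ∘ₗ (latticeQuotientAlgHom L K).toLinearMap = π.toLinearMap := by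
    refine MvPolynomial.linearMap_ext fun d => LinearMap.ext_ring ?_
    simp [ψ, latticeQuotientAlgHom_monomial, hfactors.extend_apply]
  rw [← Ideal.Quotient.eq_zero_iff_mem]
  simpa [π, RingHom.mem_ker.1 hf] using (LinearMap.congr_fun hψ f).symm

lemma latticeIdeal_eq_ker : latticeIdeal K L = RingHom.ker (latticeQuotientAlgHom L K) :=
  le_antisymm latticeIdeal_le_ker ker_le_latticeIdeal

end LatticeQuotient

theorem colon_and_eq_latticeIdeal (n : ℕ) (hn : 3 ≤ n)
    (L : Matrix (Fin n) (Fin n) ℤ) (hL : IsICB n L)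
    (K : Type*) [Field K] :
    (Ideal.span {f | ∃ C : Finset (Fin n),
        C.Nonempty ∧ (⟨n - 1, by omega⟩ : Fin n) ∉ C ∧
          f = binom K (L.mulVec (chi C))}).colon
      (Ideal.span {(X (⟨n - 1, by omega⟩ : Fin n) : MvPolynomial (Fin n) K)}) =
      Ideal.span {f | ∃ C : Finset (Fin n),
        C.Nonempty ∧ (⟨n - 1, by omega⟩ : Fin n) ∉ C ∧
          f = binom K (L.mulVec (chi C))} ∧
    Ideal.span {f | ∃ C : Finset (Fin n),
        C.Nonempty ∧ (⟨n - 1, by omega⟩ : Fin n) ∉ C ∧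
          f = binom K (L.mulVec (chi C))} = latticeIdeal K L := by
  obtain ⟨⟨-, hsign, hrow, -⟩, -⟩ := hL
  have hJ : cutIdeal K L ⟨n - 1, by omega⟩ = latticeIdeal K L :=
    cutIdeal_eq_latticeIdeal hsign hrow
  refine ⟨?_, hJ⟩
  change (cutIdeal K L _).colon _ = cutIdeal K L _
  rw [hJ, latticeIdeal_eq_ker]
  exact RingHom.ker_colon_span_singleton_of_isUnit _ (isUnit_latticeQuotientAlgHom_X _)
end
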